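/- arXiv:2309.00098 — 2 statements merged into one kernel-verified Lean document; each statement's English description precedes it below -/
import Mathlib

section
/- Let H be a Sperner hypergraph. Then the dual hypergraph of the dual hypergraph of H equals H, i.e., (H^d)^d = H. -/
open Finset
open scoped Classical

variable {V : Type*} [Fintype V] [DecidableEq V]

/-- A hypergraph on vertex set `V` is given by its finite set of hyperedges `E`;
the condition that every vertex belongs to at least one hyperedge. -/
def Covers (E : Finset (Finset V)) : Prop := ∀ v : V, ∃ e ∈ E, v ∈ e

/-- A hypergraph is Sperner if no hyperedge is contained in another hyperedge. -/
def SpernerHG (E : Finset (Finset V)) : Prop := ∀ e ∈ E, ∀ f ∈ E, e ⊆ f → e = f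

/-- A transversal of a hypergraph: a set of vertices intersecting all hyperedges. -/
def IsTransversal (E : Finset (Finset V)) (T : Finset V) : Prop := ∀ e ∈ E, (e ∩ T).Nonempty

/-- A minimal transversal: a transversal not properly containing another transversal. -/
def IsMinTransversal (E : Finset (Finset V)) (T : Finset V) : Prop :=
  IsTransversal E T ∧ ∀ T' ⊆ T, IsTransversal E T' → T' = T

/-- The dual hypergraph: its hyperedges are exactly the minimal transversals. -/
noncomputable def dualHG (E : Finset (Finset V)) : Finset (Finset V) :=
  Finset.univ.filter fun T => IsMinTransversal E T

/-- The co-occurrence graph of a hypergraph: two distinct vertices are adjacent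
iff some hyperedge contains both. -/
def coocGraph (E : Finset (Finset V)) : SimpleGraph V where
  Adj u v := u ≠ v ∧ ∃ e ∈ E, u ∈ e ∧ v ∈ e
  symm := by
    constructor
    rintro u v ⟨huv, e, he, hu, hv⟩
    exact ⟨Ne.symm huv, e, he, hv, hu⟩
  loopless := by
    constructor
    rintro v ⟨hv, -⟩
    exact hv rfl

/-- A maximal clique of a graph: a clique not properly contained in any other clique. -/
def IsMaxClique (G : SimpleGraph V) (C : Finset V) : Prop :=
  G.IsClique (C : Set V) ∧ ∀ D : Finset V, G.IsClique (D : Set V) → C ⊆ D → D = C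

/-- A hypergraph is conformal if every maximal clique of its co-occurrence graph
is a hyperedge. -/
def ConformalHG (E : Finset (Finset V)) : Prop :=
  ∀ C : Finset V, IsMaxClique (coocGraph E) C → C ∈ E

/-- A hypergraph is dually conformal if its dual hypergraph is conformal. -/
def DuallyConformalHG (E : Finset (Finset V)) : Prop :=
  ConformalHG (dualHG E)

/-- A clique transversal of a graph: a set of vertices meeting all maximal cliques. -/
def IsCliqueTransversal (G : SimpleGraph V) (X : Finset V) : Prop :=
  ∀ C : Finset V, IsMaxClique G C → (C ∩ X).Nonempty

/-- A minimal clique transversal: a clique transversal not properly containing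
another clique transversal. -/
def IsMinCliqueTransversal (G : SimpleGraph V) (X : Finset V) : Prop :=
  IsCliqueTransversal G X ∧ ∀ Y ⊆ X, IsCliqueTransversal G Y → Y = X

/-- The upper clique transversal number: the maximum size of a minimal clique
transversal. -/
noncomputable def uct (G : SimpleGraph V) : ℕ :=
  (Finset.univ.filter fun X : Finset V => IsMinCliqueTransversal G X).sup Finset.card

/-
Every edge `e` of `E` meets every minimal transversal, so it is a transversal of
`dualHG E`. Conversely, a transversal `T` of `dualHG E` contains an edge of `E`: otherwise `Tᶜ`
meets every edge, hence contains a minimal transversal of `E`, which `T` cannot meet. Thus the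
minimal transversals of `dualHG E` are the inclusion-minimal edges of `E`, i.e. all of `E` when
`E` is Sperner.
-/

lemma mem_dualHG {E : Finset (Finset V)} {T : Finset V} :
    T ∈ dualHG E ↔ IsMinTransversal E T := by
  simp [dualHG]

omit [Fintype V] in
lemma IsTransversal.exists_isMinTransversal_subset {E : Finset (Finset V)} {T : Finset V}
    (hT : IsTransversal E T) : ∃ M ⊆ T, IsMinTransversal E M := by
  obtain ⟨M, hMT, hM, hMmin⟩ := exists_minimal_le_of_wellFoundedLT _ T hT
  exact ⟨M, hMT, hM, fun T' hT'M hT' => le_antisymm hT'M (hMmin hT' hT'M)⟩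

lemma isTransversal_compl_of_forall_not_subset {E : Finset (Finset V)} {T : Finset V}
    (h : ∀ e ∈ E, ¬ e ⊆ T) : IsTransversal E Tᶜ := by
  intro e he
  obtain ⟨a, hae, haT⟩ := not_subset.mp (h e he)
  exact ⟨a, mem_inter.mpr ⟨hae, mem_compl.mpr haT⟩⟩

lemma isTransversal_dualHG_of_mem {E : Finset (Finset V)} {e : Finset V} (he : e ∈ E) :
    IsTransversal (dualHG E) e := by
  intro M hM
  rw [inter_comm]
  exact (mem_dualHG.mp hM).1 e he

lemma IsTransversal.exists_mem_subset_of_dualHG {E : Finset (Finset V)} {T : Finset V}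
    (hT : IsTransversal (dualHG E) T) : ∃ e ∈ E, e ⊆ T := by
  by_contra! h
  obtain ⟨M, hMT, hM⟩ :=
    (isTransversal_compl_of_forall_not_subset h).exists_isMinTransversal_subset
  obtain ⟨x, hx⟩ := hT M (mem_dualHG.mpr hM)
  rw [mem_inter] at hx
  exact mem_compl.mp (hMT hx.1) hx.2

lemma mem_of_isMinTransversal_dualHG {E : Finset (Finset V)} {T : Finset V}
    (hT : IsMinTransversal (dualHG E) T) : T ∈ E := by
  obtain ⟨e, he, heT⟩ := hT.1.exists_mem_subset_of_dualHG
  rwa [← hT.2 e heT (isTransversal_dualHG_of_mem he)]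

lemma SpernerHG.isMinTransversal_dualHG {E : Finset (Finset V)} (hsp : SpernerHG E)
    {e : Finset V} (he : e ∈ E) : IsMinTransversal (dualHG E) e := by
  refine ⟨isTransversal_dualHG_of_mem he, fun T hTe hT => ?_⟩
  obtain ⟨f, hf, hfT⟩ := hT.exists_mem_subset_of_dualHG
  have hfe : f = e := hsp f hf e he (hfT.trans hTe)
  exact hTe.antisymm (hfe ▸ hfT)

theorem dualHG_dualHG_general (E : Finset (Finset V))
    (hsp : SpernerHG E) :
    dualHG (dualHG E) = E := by
  ext T
  rw [mem_dualHG]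
  exact ⟨mem_of_isMinTransversal_dualHG, hsp.isMinTransversal_dualHG⟩

/-- For a Sperner hypergraph `H`, `(H^d)^d = H`. -/
theorem dualHG_dualHG [Nonempty V] (E : Finset (Finset V))
    (hcov : Covers E) (hsp : SpernerHG E) :
    dualHG (dualHG E) = E :=
  dualHG_dualHG_general E hsp
end

section
/- A hypergraph H = (V, E) is conformal if and only if for every three hyperedges e1, e2, e3 ∈ E there exists a hyperedge e ∈ E such that (e1 ∩ e2) ∪ (e1 ∩ e3) ∪ (e2 ∩ e3) ⊆ e. -/
open Finset
open scoped Classical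

variable {V : Type*} [Fintype V] [DecidableEq V]

section

variable {α : Type*} {E : Finset (Finset α)}

def GilmoreProperty [DecidableEq α] (E : Finset (Finset α)) : Prop :=
  ∀ e1 ∈ E, ∀ e2 ∈ E, ∀ e3 ∈ E, ∃ e ∈ E, (e1 ∩ e2) ∪ (e1 ∩ e3) ∪ (e2 ∩ e3) ⊆ e

theorem exists_isMaxClique_superset [Finite α] {G : SimpleGraph α} {S : Finset α}
    (hS : G.IsClique (S : Set α)) : ∃ C, IsMaxClique G C ∧ S ⊆ C := by
  obtain ⟨C, hSC, hC⟩ :=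
    Finite.exists_le_maximal (p := fun D : Finset α => G.IsClique (D : Set α)) hS
  exact ⟨C, ⟨hC.prop, fun D hD hCD => le_antisymm (hC.2 hD hCD) hCD⟩, hSC⟩

theorem subset_union_inter_of_erase_subset [DecidableEq α] {S f₁ f₂ f₃ : Finset α} {u v w : α}
    (huv : u ≠ v) (huw : u ≠ w) (hvw : v ≠ w)
    (h₁ : S.erase u ⊆ f₁) (h₂ : S.erase v ⊆ f₂) (h₃ : S.erase w ⊆ f₃) :
    S ⊆ (f₁ ∩ f₂) ∪ (f₁ ∩ f₃) ∪ (f₂ ∩ f₃) := by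
  intro x hx
  have m₁ : x ≠ u → x ∈ f₁ := fun h => h₁ (mem_erase.2 ⟨h, hx⟩)
  have m₂ : x ≠ v → x ∈ f₂ := fun h => h₂ (mem_erase.2 ⟨h, hx⟩)
  have m₃ : x ≠ w → x ∈ f₃ := fun h => h₃ (mem_erase.2 ⟨h, hx⟩)
  simp only [mem_union, mem_inter]
  grind

namespace coocGraph

theorem isClique_of_mem {e : Finset α} (he : e ∈ E) : (coocGraph E).IsClique (e : Set α) :=
  fun _ hu _ hv huv => ⟨huv, e, he, hu, hv⟩

/-- Every vertex of `(e₁ ∩ e₂) ∪ (e₁ ∩ e₃) ∪ (e₂ ∩ e₃)` lies in two of the three hyperedges, so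
by pigeonhole any two such vertices share one of them. -/
theorem isClique_union_inter [DecidableEq α] {e₁ e₂ e₃ : Finset α}
    (h₁ : e₁ ∈ E) (h₂ : e₂ ∈ E) (h₃ : e₃ ∈ E) :
    (coocGraph E).IsClique (((e₁ ∩ e₂) ∪ (e₁ ∩ e₃) ∪ (e₂ ∩ e₃) : Finset α) : Set α) := by
  intro u hu v hv huv
  refine ⟨huv, ?_⟩
  have hsub : ({e₁, e₂, e₃} : Finset (Finset α)) ⊆ E := by
    simp only [insert_subset_iff, singleton_subset_iff]; exact ⟨h₁, h₂, h₃⟩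
  suffices ∃ e ∈ ({e₁, e₂, e₃} : Finset (Finset α)), u ∈ e ∧ v ∈ e by
    obtain ⟨e, he, hue, hve⟩ := this
    exact ⟨e, hsub he, hue, hve⟩
  simp only [coe_union, coe_inter, Set.mem_union, Set.mem_inter_iff, mem_coe] at hu hv
  simp only [mem_insert, mem_singleton, exists_eq_or_imp, exists_eq_left]
  tauto

theorem mem_of_isMaxClique_of_subset {C e : Finset α} (hC : IsMaxClique (coocGraph E) C)
    (he : e ∈ E) (hCe : C ⊆ e) : C ∈ E :=
  hC.2 e (isClique_of_mem he) hCe ▸ he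

theorem exists_superset_of_isClique_of_card_le_two [Nonempty α] (hcov : Covers E)
    {S : Finset α} (hS : (coocGraph E).IsClique (S : Set α)) (hcard : S.card ≤ 2) :
    ∃ e ∈ E, S ⊆ e := by
  classical
  interval_cases h : S.card
  · obtain ⟨e, he, -⟩ := hcov (Classical.arbitrary α)
    exact ⟨e, he, by simp [card_eq_zero.1 h]⟩
  · obtain ⟨v, rfl⟩ := card_eq_one.1 h
    obtain ⟨e, he, hv⟩ := hcov v
    exact ⟨e, he, singleton_subset_iff.2 hv⟩
  · obtain ⟨u, v, huv, rfl⟩ := card_eq_two.1 h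
    obtain ⟨-, e, he, hu, hv⟩ := hS (by simp) (by simp) huv
    exact ⟨e, he, insert_subset hu (singleton_subset_iff.2 hv)⟩

/-- For a clique with three distinct vertices `u, v, w`, the hyperedges covering it minus `u`,
minus `v` and minus `w` (by induction) have a Gilmore hyperedge, and that one covers the clique. -/
theorem exists_superset_of_isClique [Nonempty α] [DecidableEq α] (hcov : Covers E)
    (hE : GilmoreProperty E) {S : Finset α} (hS : (coocGraph E).IsClique (S : Set α)) :
    ∃ e ∈ E, S ⊆ e := by
  induction S using strongInduction with
  | H S ih =>
    rcases le_or_gt S.card 2 with hcard | hcard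
    · exact exists_superset_of_isClique_of_card_le_two hcov hS hcard
    obtain ⟨u, v, w, hu, hv, hw, huv, huw, hvw⟩ := two_lt_card_iff.1 hcard
    have cover_erase : ∀ x ∈ S, ∃ e ∈ E, S.erase x ⊆ e := fun x hx =>
      ih _ (erase_ssubset hx) (hS.subset (by simp))
    obtain ⟨f₁, hf₁, h₁⟩ := cover_erase u hu
    obtain ⟨f₂, hf₂, h₂⟩ := cover_erase v hv
    obtain ⟨f₃, hf₃, h₃⟩ := cover_erase w hw
    obtain ⟨e, he, hsub⟩ := hE f₁ hf₁ f₂ hf₂ f₃ hf₃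
    exact ⟨e, he, (subset_union_inter_of_erase_subset huv huw hvw h₁ h₂ h₃).trans hsub⟩

end coocGraph

theorem gilmoreProperty_of_conformal [Finite α] [DecidableEq α] (hE : ConformalHG E) :
    GilmoreProperty E := by
  intro e₁ h₁ e₂ h₂ e₃ h₃
  obtain ⟨C, hC, hSC⟩ := exists_isMaxClique_superset (coocGraph.isClique_union_inter h₁ h₂ h₃)
  exact ⟨C, hE C hC, hSC⟩

theorem conformal_of_gilmoreProperty [Nonempty α] [DecidableEq α] (hcov : Covers E)
    (hE : GilmoreProperty E) : ConformalHG E := fun _ hC =>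
  let ⟨_, he, hCe⟩ := coocGraph.exists_superset_of_isClique hcov hE hC.1
  coocGraph.mem_of_isMaxClique_of_subset hC he hCe

end

/-- Gilmore: `H` is conformal iff for every three hyperedges
`e1, e2, e3` there is a hyperedge `e` with `(e1 ∩ e2) ∪ (e1 ∩ e3) ∪ (e2 ∩ e3) ⊆ e`. -/
theorem conformal_iff_gilmore [Nonempty V] (E : Finset (Finset V)) (hcov : Covers E) :
    ConformalHG E ↔ ∀ e1 ∈ E, ∀ e2 ∈ E, ∀ e3 ∈ E, ∃ e ∈ E,
      (e1 ∩ e2) ∪ (e1 ∩ e3) ∪ (e2 ∩ e3) ⊆ e :=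
  ⟨gilmoreProperty_of_conformal, conformal_of_gilmoreProperty hcov⟩
end
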